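/- Let 0 < a ≤ b < ∞. There exist a constant C < ∞ and M such that for all integers m ≥ M and all x ∈ [a,b], if K and L are independent Poisson random variables each with mean m·x, then |E[min(K,L)]/m − x + m^{-1/2}·√(x/π)| ≤ C·m^{-1}; equivalently, since E[min(K,L)] − m·x = −(1/2)·E|K − L|, one has E|K − L| = 2·√(m·x/π) + O(m^{-1/2}) uniformly for x ∈ [a,b]. -/

import Mathlib

/-!
Write `l = m x`. Since `min K L = K - (K - L)⁺`, the expectation is `l - E (K - L)⁺`. The
Skellam weights `q n = P(K - L = n)` satisfy the Bessel recurrence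
`(n + 1) q (n + 1) = l (q n - q (n + 2))`, which telescopes to `E (K - L)⁺ = l (q 0 + q 1)`.
Expanding the exponential against the Wallis integrals `∫₀^π cosⁿ` identifies
`q 0 + q 1 = π⁻¹ ∫₀^π e^{-2l(1 - cos θ)} (1 + cos θ) dθ`, and `t = sin (θ / 2)` turns this into
`(4 / π) ∫₀¹ √(1 - t²) e^{-4lt²} dt`. Replacing `√(1 - t²)` by `1` gives the half-line Gaussian
integral, i.e. the main term `1 / √(π l)`, at a cost of at most
`(4 / π) ∫₀^∞ t² e^{-4lt²} dt = O(l^{-3/2})`.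
-/

open Real MeasureTheory Set
open scoped Nat

noncomputable def poissonWeight (l : ℝ) (k : ℕ) : ℝ := exp (-l) * l ^ k / k !

/-- For independent `K, L ~ Poisson(l)`, `skellamWeight l n = P(K - L = n)`. -/
noncomputable def skellamWeight (l : ℝ) (n : ℕ) : ℝ :=
  ∑' k, poissonWeight l (n + k) * poissonWeight l k

lemma fst_add_snd_prod_injective : Function.Injective (fun x : ℕ × ℕ => (x.1 + x.2, x.2)) := by
  rintro ⟨a, b⟩ ⟨c, d⟩ h
  simp only [Prod.mk.injEq] at h ⊢
  omega

section Discrete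

variable {l : ℝ}

lemma poissonWeight_nonneg (hl : 0 ≤ l) (k : ℕ) : 0 ≤ poissonWeight l k := by
  unfold poissonWeight; positivity

lemma hasSum_poissonWeight (l : ℝ) : HasSum (poissonWeight l) 1 := by
  have := (NormedSpace.expSeries_div_hasSum_exp l).mul_left (exp (-l))
  rw [← exp_eq_exp_ℝ, ← exp_add, neg_add_cancel, exp_zero] at this
  simp only [← mul_div_assoc] at this
  exact this

lemma succ_mul_poissonWeight_succ (l : ℝ) (k : ℕ) :
    (k + 1 : ℝ) * poissonWeight l (k + 1) = l * poissonWeight l k := by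
  simp only [poissonWeight, Nat.factorial_succ, pow_succ, Nat.cast_mul, Nat.cast_succ]
  field_simp

lemma hasSum_mul_poissonWeight (l : ℝ) :
    HasSum (fun k : ℕ => (k : ℝ) * poissonWeight l k) l := by
  rw [← hasSum_nat_add_iff' 1]
  simpa [succ_mul_poissonWeight_succ] using (hasSum_poissonWeight l).mul_left l

lemma summable_poissonWeight_add_mul (hl : 0 ≤ l) :
    Summable (fun x : ℕ × ℕ => poissonWeight l (x.1 + x.2) * poissonWeight l x.2) := by
  have hprod : Summable (fun x : ℕ × ℕ => poissonWeight l x.1 * poissonWeight l x.2) :=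
    (hasSum_poissonWeight l).summable.mul_of_nonneg (hasSum_poissonWeight l).summable
      (poissonWeight_nonneg hl) (poissonWeight_nonneg hl)
  exact (hprod.comp_injective fst_add_snd_prod_injective).congr fun x => rfl

lemma hasSum_skellamWeight (hl : 0 ≤ l) (n : ℕ) :
    HasSum (fun k => poissonWeight l (n + k) * poissonWeight l k) (skellamWeight l n) :=
  ((summable_poissonWeight_add_mul hl).prod_factor n).hasSum

lemma summable_skellamWeight (hl : 0 ≤ l) : Summable (skellamWeight l) :=
  (summable_poissonWeight_add_mul hl).prod

lemma succ_mul_skellamWeight_succ (hl : 0 ≤ l) (n : ℕ) :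
    (n + 1 : ℝ) * skellamWeight l (n + 1) = l * (skellamWeight l n - skellamWeight l (n + 2)) := by
  have hshift : HasSum (fun k : ℕ => poissonWeight l (n + 1 + k) * (k * poissonWeight l k))
      (l * skellamWeight l (n + 2)) := by
    rw [← hasSum_nat_add_iff' 1, Finset.sum_range_one, Nat.cast_zero, zero_mul, mul_zero,
      sub_zero]
    refine ((hasSum_skellamWeight hl (n + 2)).mul_left l).congr_fun fun k => ?_
    rw [Nat.cast_add_one, succ_mul_poissonWeight_succ, show n + 1 + (k + 1) = n + 2 + k by omega]
    ring
  have hsplit : ∀ k : ℕ, (n + 1 : ℝ) * (poissonWeight l (n + 1 + k) * poissonWeight l k)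
      = l * (poissonWeight l (n + k) * poissonWeight l k)
        - poissonWeight l (n + 1 + k) * (k * poissonWeight l k) := by
    intro k
    have h := succ_mul_poissonWeight_succ l (n + k)
    rw [show n + 1 + k = n + k + 1 by omega]
    push_cast at h ⊢
    linear_combination poissonWeight l k * h
  have hlhs := ((hasSum_skellamWeight hl n).mul_left l).sub hshift
  simp only [← hsplit] at hlhs
  rw [mul_sub]
  exact ((hasSum_skellamWeight hl (n + 1)).mul_left _).unique hlhs

lemma hasSum_mul_skellamWeight (hl : 0 ≤ l) :
    HasSum (fun n : ℕ => (n : ℝ) * skellamWeight l n)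
      (l * (skellamWeight l 0 + skellamWeight l 1)) := by
  have hq := (summable_skellamWeight hl).hasSum
  have htail := (hasSum_nat_add_iff' 2).mpr hq
  rw [← hasSum_nat_add_iff' 1, Finset.sum_range_one, Nat.cast_zero, zero_mul, sub_zero]
  rw [Finset.sum_range_succ, Finset.sum_range_one] at htail
  have h := (hq.sub htail).mul_left l
  rw [sub_sub_cancel] at h
  refine h.congr_fun fun n => ?_
  rw [Nat.cast_add_one, succ_mul_skellamWeight_succ hl]

lemma hasSum_fst_mul_poissonWeight_mul (hl : 0 ≤ l) :
    HasSum (fun x : ℕ × ℕ => x.1 * poissonWeight l x.1 * poissonWeight l x.2) l := by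
  simpa using (hasSum_mul_poissonWeight l).mul (hasSum_poissonWeight l)
    ((hasSum_mul_poissonWeight l).summable.mul_of_nonneg (hasSum_poissonWeight l).summable
      (fun k => mul_nonneg k.cast_nonneg (poissonWeight_nonneg hl k)) (poissonWeight_nonneg hl))

lemma hasSum_tsub_mul_poissonWeight (hl : 0 ≤ l) :
    HasSum (fun x : ℕ × ℕ => ((x.1 - x.2 : ℕ) : ℝ) * (poissonWeight l x.1 * poissonWeight l x.2))
      (l * (skellamWeight l 0 + skellamWeight l 1)) := by
  rw [← fst_add_snd_prod_injective.hasSum_iff]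
  swap
  · rintro ⟨j, k⟩ hjk
    have : j < k := by
      by_contra! h
      exact hjk ⟨(j - k, k), by simp [Nat.sub_add_cancel h]⟩
    simp [Nat.sub_eq_zero_of_le this.le]
  have hsumm : Summable (fun y : ℕ × ℕ =>
      (y.1 : ℝ) * (poissonWeight l (y.1 + y.2) * poissonWeight l y.2)) := by
    have hbig : Summable (fun y : ℕ × ℕ =>
        ((y.1 + y.2 : ℕ) : ℝ) * poissonWeight l (y.1 + y.2) * poissonWeight l y.2) :=
      ((hasSum_fst_mul_poissonWeight_mul hl).summable.comp_injective
        fst_add_snd_prod_injective).congr fun y => rfl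
    refine Summable.of_nonneg_of_le (fun y => ?_) (fun y => ?_) hbig
    · exact mul_nonneg y.1.cast_nonneg
        (mul_nonneg (poissonWeight_nonneg hl _) (poissonWeight_nonneg hl _))
    · rw [mul_assoc]
      gcongr
      · exact mul_nonneg (poissonWeight_nonneg hl _) (poissonWeight_nonneg hl _)
      · exact_mod_cast Nat.le_add_right y.1 y.2
  have hfib := hsumm.hasSum.prod_fiberwise fun n =>
    (hasSum_skellamWeight hl n).mul_left (n : ℝ)
  rw [← hfib.unique (hasSum_mul_skellamWeight hl)]
  exact hsumm.hasSum.congr_fun fun y => by simp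

lemma hasSum_min_mul_poissonWeight (hl : 0 ≤ l) :
    HasSum (fun x : ℕ × ℕ => (min x.1 x.2 : ℝ) * poissonWeight l x.1 * poissonWeight l x.2)
      (l * (1 - (skellamWeight l 0 + skellamWeight l 1))) := by
  rw [mul_sub, mul_one]
  refine ((hasSum_fst_mul_poissonWeight_mul hl).sub
    (hasSum_tsub_mul_poissonWeight hl)).congr_fun fun ⟨j, k⟩ => ?_
  have hmin : min (j : ℝ) k = j - ((j - k : ℕ) : ℝ) := by
    rcases le_total j k with h | h
    · simp [h, Nat.sub_eq_zero_of_le h]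
    · simp [h, Nat.cast_sub h]
  rw [hmin]
  ring

end Discrete

noncomputable def cosPowIntegral (n : ℕ) : ℝ := ∫ θ in (0 : ℝ)..π, cos θ ^ n

lemma cosPowIntegral_add_two (n : ℕ) :
    cosPowIntegral (n + 2) = (n + 1) / (n + 2) * cosPowIntegral n := by
  simp [cosPowIntegral, integral_cos_pow]

lemma cosPowIntegral_two_mul_add_one (k : ℕ) : cosPowIntegral (2 * k + 1) = 0 := by
  induction k with
  | zero => simp [cosPowIntegral]
  | succ k ih =>
    rw [show 2 * (k + 1) + 1 = 2 * k + 1 + 2 by ring, cosPowIntegral_add_two, ih, mul_zero]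

lemma cosPowIntegral_two_mul (k : ℕ) :
    cosPowIntegral (2 * k) = π * (2 * k)! / (4 ^ k * (k ! : ℝ) ^ 2) := by
  induction k with
  | zero => simp [cosPowIntegral]
  | succ k ih =>
    rw [show 2 * (k + 1) = 2 * k + 2 by ring, cosPowIntegral_add_two, ih,
      Nat.factorial_succ (2 * k + 1), Nat.factorial_succ (2 * k), Nat.factorial_succ k]
    push_cast
    field_simp
    ring

lemma hasSum_integral_exp_mul_cos_mul_cos_pow (z : ℝ) (j : ℕ) :
    HasSum (fun n : ℕ => z ^ n / n ! * cosPowIntegral (n + j))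
      (∫ θ in (0 : ℝ)..π, exp (z * cos θ) * cos θ ^ j) := by
  refine (intervalIntegral.hasSum_integral_of_dominated_convergence (fun n _ => |z| ^ n / n !)
    (fun n =>
      (by fun_prop : Continuous fun θ => z ^ n / n ! * cos θ ^ (n + j)).aestronglyMeasurable)
    (fun n => ae_of_all _ fun θ _ => ?_) (ae_of_all _ fun θ _ => summable_pow_div_factorial |z|)
    intervalIntegrable_const (ae_of_all _ fun θ _ => ?_)).congr_fun fun n => ?_
  · rw [norm_mul, Real.norm_eq_abs, Real.norm_eq_abs, abs_div, abs_pow, Nat.abs_cast, abs_pow]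
    exact mul_le_of_le_one_right (by positivity) (pow_le_one₀ (abs_nonneg _) (abs_cos_le_one θ))
  · rw [exp_eq_exp_ℝ]
    refine ((NormedSpace.expSeries_div_hasSum_exp (z * cos θ)).mul_right (cos θ ^ j)).congr_fun
      fun n => ?_
    ring
  · exact (intervalIntegral.integral_const_mul _ _).symm

lemma hasSum_pow_two_mul_div_factorial_sq (l : ℝ) :
    HasSum (fun k : ℕ => l ^ (2 * k) / (k ! : ℝ) ^ 2)
      (π⁻¹ * ∫ θ in (0 : ℝ)..π, exp (2 * l * cos θ)) := by
  have h := (hasSum_integral_exp_mul_cos_mul_cos_pow (2 * l) 0).mul_left π⁻¹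
  simp only [pow_zero, mul_one, add_zero] at h
  rw [← (mul_right_injective₀ (two_ne_zero' ℕ)).hasSum_iff] at h
  · refine h.congr_fun fun k => ?_
    simp only [Function.comp, cosPowIntegral_two_mul]
    rw [mul_pow, pow_mul (2 : ℝ), show (2 : ℝ) ^ 2 = 4 by norm_num]
    have := pi_pos.ne'
    field_simp
  · rintro n hn
    simp only [mem_range, not_exists] at hn
    obtain ⟨k, rfl⟩ : Odd n := Nat.not_even_iff_odd.mp fun ⟨k, hk⟩ => hn k (by omega)
    simp [cosPowIntegral_two_mul_add_one]

lemma hasSum_pow_two_mul_add_one_div_factorial_mul (l : ℝ) :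
    HasSum (fun k : ℕ => l ^ (2 * k + 1) / ((k + 1)! * k ! : ℝ))
      (π⁻¹ * ∫ θ in (0 : ℝ)..π, exp (2 * l * cos θ) * cos θ) := by
  have h := (hasSum_integral_exp_mul_cos_mul_cos_pow (2 * l) 1).mul_left π⁻¹
  simp only [pow_one] at h
  have hinj : Function.Injective fun k : ℕ => 2 * k + 1 := fun a b hab => by simpa using hab
  rw [← hinj.hasSum_iff] at h
  · refine h.congr_fun fun k => ?_
    simp only [Function.comp, show 2 * k + 1 + 1 = 2 * (k + 1) by ring, cosPowIntegral_two_mul]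
    rw [show 2 * (k + 1) = 2 * k + 1 + 1 by ring, Nat.factorial_succ (2 * k + 1),
      Nat.factorial_succ k, mul_pow, pow_succ (2 : ℝ), pow_mul (2 : ℝ),
      show (2 : ℝ) ^ 2 = 4 by norm_num]
    have := pi_pos.ne'
    push_cast
    field_simp
    ring
  · rintro n hn
    simp only [mem_range, not_exists] at hn
    obtain ⟨k, rfl⟩ : Even n := Nat.not_odd_iff_even.mp fun ⟨k, hk⟩ => hn k (by omega)
    simp [← two_mul, cosPowIntegral_two_mul_add_one]

lemma poissonWeight_mul_poissonWeight (l : ℝ) (j k : ℕ) :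
    poissonWeight l j * poissonWeight l k = exp (-(2 * l)) * (l ^ (j + k) / (j ! * k ! : ℝ)) := by
  simp only [poissonWeight, pow_add]
  rw [show -(2 * l) = -l + -l by ring, exp_add]
  field_simp

lemma skellamWeight_zero_add_one (l : ℝ) :
    skellamWeight l 0 + skellamWeight l 1
      = π⁻¹ * ∫ θ in (0 : ℝ)..π, exp (-(2 * l) * (1 - cos θ)) * (1 + cos θ) := by
  have h0 := ((hasSum_pow_two_mul_div_factorial_sq l).mul_left (exp (-(2 * l)))).congr_fun
    fun k => (poissonWeight_mul_poissonWeight l (0 + k) k).trans (by ring_nf)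
  have h1 := ((hasSum_pow_two_mul_add_one_div_factorial_mul l).mul_left (exp (-(2 * l)))).congr_fun
    fun k => (poissonWeight_mul_poissonWeight l (1 + k) k).trans (by ring_nf)
  have hint : ∀ θ, exp (-(2 * l) * (1 - cos θ)) * (1 + cos θ)
      = exp (-(2 * l)) * (exp (2 * l * cos θ) + exp (2 * l * cos θ) * cos θ) := by
    intro θ
    rw [← mul_one_add, ← mul_assoc, ← exp_add]
    ring_nf
  simp only [skellamWeight, h0.tsum_eq, h1.tsum_eq, hint, intervalIntegral.integral_const_mul]
  rw [intervalIntegral.integral_add (by apply Continuous.intervalIntegrable; fun_prop)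
    (by apply Continuous.intervalIntegrable; fun_prop)]
  ring

lemma integral_exp_mul_one_sub_cos_mul_one_add_cos (c : ℝ) :
    ∫ θ in (0 : ℝ)..π, exp (-c * (1 - cos θ)) * (1 + cos θ)
      = 4 * ∫ t in (0 : ℝ)..1, √(1 - t ^ 2) * exp (-(2 * c) * t ^ 2) := by
  have hderiv : ∀ θ ∈ uIcc 0 π, HasDerivAt (fun θ => sin (θ / 2)) (cos (θ / 2) / 2) θ :=
    fun θ _ => by simpa [div_eq_mul_inv] using ((hasDerivAt_id θ).div_const 2).sin
  have h := intervalIntegral.integral_comp_mul_deriv hderiv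
    (by fun_prop : Continuous fun θ => cos (θ / 2) / 2).continuousOn
    (g := fun t => 4 * (√(1 - t ^ 2) * exp (-(2 * c) * t ^ 2))) (by fun_prop)
  simp only [Function.comp, zero_div, sin_zero, sin_pi_div_two] at h
  rw [← intervalIntegral.integral_const_mul, ← h]
  refine intervalIntegral.integral_congr fun θ hθ => ?_
  rw [uIcc_of_le pi_pos.le] at hθ
  have hhalf : √(1 - sin (θ / 2) ^ 2) = cos (θ / 2) :=
    (cos_eq_sqrt_one_sub_sin_sq (by linarith [hθ.1, pi_pos]) (by linarith [hθ.2])).symm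
  have hdouble : cos θ = 2 * cos (θ / 2) ^ 2 - 1 := by
    rw [cos_sq (θ / 2), mul_div_cancel₀ θ two_ne_zero]
    ring
  rw [hhalf, sin_sq, hdouble]
  ring_nf

lemma sqrt_one_sub_sq_le_one (t : ℝ) : √(1 - t ^ 2) ≤ 1 :=
  sqrt_le_one.mpr (by nlinarith [sq_nonneg t])

lemma one_sub_sqrt_one_sub_sq_le_sq (t : ℝ) : 1 - √(1 - t ^ 2) ≤ t ^ 2 := by
  rcases le_or_gt (t ^ 2) 1 with h | h
  · have : 1 - t ^ 2 ≤ √(1 - t ^ 2) :=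
      (le_sqrt (by linarith) (by linarith)).mpr (by nlinarith [sq_nonneg t])
    linarith
  · linarith [sqrt_nonneg (1 - t ^ 2)]

lemma sq_mul_exp_neg_mul_sq_le {b : ℝ} (hb : 0 < b) (t : ℝ) :
    t ^ 2 * exp (-b * t ^ 2) ≤ 2 / b * exp (-(b / 2) * t ^ 2) := by
  have hsplit : exp (-b * t ^ 2) = exp (-(b / 2) * t ^ 2) * exp (-(b / 2) * t ^ 2) := by
    rw [← exp_add]
    ring_nf
  have hpoly : t ^ 2 * exp (-(b / 2) * t ^ 2) ≤ 2 / b := by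
    rw [neg_mul, exp_neg, ← div_eq_mul_inv, div_le_div_iff₀ (exp_pos _) hb]
    nlinarith [add_one_le_exp (b / 2 * t ^ 2)]
  rw [hsplit, ← mul_assoc]
  exact mul_le_mul_of_nonneg_right hpoly (exp_pos _).le

lemma abs_integral_sqrt_one_sub_sq_mul_exp_sub_le {b : ℝ} (hb : 0 < b) :
    |(∫ t in (0 : ℝ)..1, √(1 - t ^ 2) * exp (-b * t ^ 2)) - √(π / b) / 2| ≤ √(2 * π / b) / b := by
  have hG := integrable_exp_neg_mul_sq hb
  have hS : Integrable (fun t : ℝ => √(1 - t ^ 2) * exp (-b * t ^ 2)) :=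
    hG.mono' (by fun_prop : Continuous _).aestronglyMeasurable (ae_of_all _ fun t => by
      rw [norm_mul, norm_of_nonneg (sqrt_nonneg _), norm_of_nonneg (exp_pos _).le]
      exact mul_le_of_le_one_left (exp_pos _).le (sqrt_one_sub_sq_le_one t))
  have hIoi : ∫ t in (0 : ℝ)..1, √(1 - t ^ 2) * exp (-b * t ^ 2)
      = ∫ t in Ioi 0, √(1 - t ^ 2) * exp (-b * t ^ 2) := by
    -- `√(1 - t ^ 2) = 0` for `t ≥ 1`, so nothing is lost beyond `[0, 1]`
    rw [intervalIntegral.integral_of_le zero_le_one,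
      setIntegral_eq_of_subset_of_forall_sdiff_eq_zero measurableSet_Ioi Ioc_subset_Ioi_self]
    rintro t ⟨ht0, ht⟩
    have ht1 : 1 < t := by
      by_contra! h
      exact ht ⟨ht0, h⟩
    rw [sqrt_eq_zero'.mpr (by nlinarith), zero_mul]
  have hgap : √(π / b) / 2 - ∫ t in Ioi 0, √(1 - t ^ 2) * exp (-b * t ^ 2)
      = ∫ t in Ioi 0, (1 - √(1 - t ^ 2)) * exp (-b * t ^ 2) := by
    rw [← integral_gaussian_Ioi, ← integral_sub hG.integrableOn hS.integrableOn]
    congr 1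
    funext t
    ring
  have hnonneg : 0 ≤ ∫ t in Ioi 0, (1 - √(1 - t ^ 2)) * exp (-b * t ^ 2) :=
    setIntegral_nonneg measurableSet_Ioi fun t _ =>
      mul_nonneg (sub_nonneg.mpr (sqrt_one_sub_sq_le_one t)) (exp_pos _).le
  have hle : ∫ t in Ioi 0, (1 - √(1 - t ^ 2)) * exp (-b * t ^ 2)
      ≤ ∫ t in Ioi 0, 2 / b * exp (-(b / 2) * t ^ 2) :=
    integral_mono_of_nonneg
      (ae_of_all _ fun t => mul_nonneg (sub_nonneg.mpr (sqrt_one_sub_sq_le_one t)) (exp_pos _).le)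
      ((integrable_exp_neg_mul_sq (half_pos hb)).const_mul _).integrableOn
      (ae_of_all _ fun t => (mul_le_mul_of_nonneg_right (one_sub_sqrt_one_sub_sq_le_sq t)
        (exp_pos _).le).trans (sq_mul_exp_neg_mul_sq_le hb t))
  have hval : ∫ t in Ioi 0, 2 / b * exp (-(b / 2) * t ^ 2) = √(2 * π / b) / b := by
    rw [integral_const_mul, integral_gaussian_Ioi, show π / (b / 2) = 2 * π / b by field_simp]
    ring
  rw [hIoi, abs_sub_comm, abs_of_nonneg (hgap ▸ hnonneg)]
  linarith

lemma abs_skellamWeight_zero_add_one_sub_le {l : ℝ} (hl : 0 < l) :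
    |skellamWeight l 0 + skellamWeight l 1 - 1 / √(π * l)| ≤ √(π / (2 * l)) / (π * l) := by
  have hmain : 1 / √(π * l) = π⁻¹ * (4 * (√(π / (2 * (2 * l))) / 2)) := by
    rw [show π / (2 * (2 * l)) = (π * l) / (2 * l) ^ 2 by field_simp,
      sqrt_div (mul_pos pi_pos hl).le, sqrt_sq (by positivity)]
    have := sqrt_pos.mpr (mul_pos pi_pos hl)
    field_simp
    linear_combination (-4) * sq_sqrt (mul_pos pi_pos hl).le
  have herr : √(π / (2 * l)) / (π * l)
      = π⁻¹ * (4 * (√(2 * π / (2 * (2 * l))) / (2 * (2 * l)))) := by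
    rw [show 2 * π / (2 * (2 * l)) = π / (2 * l) by field_simp]
    field_simp
    ring
  rw [skellamWeight_zero_add_one, integral_exp_mul_one_sub_cos_mul_one_add_cos, hmain, herr,
    ← mul_sub, ← mul_sub, abs_mul, abs_mul, abs_of_pos (inv_pos.mpr pi_pos),
    abs_of_pos (by norm_num : (0 : ℝ) < 4)]
  gcongr
  exact abs_integral_sqrt_one_sub_sq_mul_exp_sub_le (by positivity)

lemma rpow_neg_one_half_mul_sqrt_div_pi {m x : ℝ} (hm : 0 < m) (hx : 0 < x) :
    m ^ (-(1 : ℝ) / 2) * √(x / π) = x * (1 / √(π * (m * x))) := by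
  rw [neg_div, rpow_neg hm.le, ← sqrt_eq_rpow, sqrt_div hx.le, sqrt_mul pi_pos.le,
    sqrt_mul hm.le]
  have := sqrt_pos.mpr hx
  field_simp
  rw [sq_sqrt hx.le]

theorem poisson_min_mean_expansion_general (a b : ℝ) (ha : 0 < a) :
    ∃ C : ℝ, ∃ M : ℕ, ∀ m : ℕ, M ≤ m → ∀ x ∈ Set.Icc a b,
      |(∑' p : ℕ × ℕ, (min p.1 p.2 : ℝ)
            * (Real.exp (-((m : ℝ) * x)) * ((m : ℝ) * x) ^ p.1 / Nat.factorial p.1)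
            * (Real.exp (-((m : ℝ) * x)) * ((m : ℝ) * x) ^ p.2 / Nat.factorial p.2))
          / (m : ℝ)
        - x + (m : ℝ) ^ (-(1:ℝ)/2) * Real.sqrt (x / Real.pi)|
      ≤ C * ((m : ℝ))⁻¹ := by
  refine ⟨√(π / (2 * a)) / π, 1, fun m hm x hx => ?_⟩
  have hx0 : 0 < x := ha.trans_le hx.1
  have hm1 : (1 : ℝ) ≤ m := by exact_mod_cast hm
  have hl : 0 < (m : ℝ) * x := by positivity
  have hal : a ≤ m * x := hx.1.trans (le_mul_of_one_le_left hx0.le hm1)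
  set Q := skellamWeight (m * x) 0 + skellamWeight (m * x) 1
  have hsum : ∑' p : ℕ × ℕ, (min p.1 p.2 : ℝ) * poissonWeight (m * x) p.1
      * poissonWeight (m * x) p.2 = m * x * (1 - Q) :=
    (hasSum_min_mul_poissonWeight hl.le).tsum_eq
  erw [hsum]
  rw [rpow_neg_one_half_mul_sqrt_div_pi (by positivity) hx0,
    show m * x * (1 - Q) / m - x + x * (1 / √(π * (m * x))) = -(x * (Q - 1 / √(π * (m * x)))) by
      field_simp; ring, abs_neg, abs_mul, abs_of_pos hx0]
  calc x * |Q - 1 / √(π * (m * x))|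
      ≤ x * (√(π / (2 * (m * x))) / (π * (m * x))) := by
        gcongr
        exact abs_skellamWeight_zero_add_one_sub_le hl
    _ = √(π / (2 * (m * x))) / π * (m : ℝ)⁻¹ := by field_simp
    _ ≤ √(π / (2 * a)) / π * (m : ℝ)⁻¹ := by gcongr

/-- Mean absolute difference of two independent Poisson(m·x) variables (Skellam):
`E[min(K,L)]/m = x − m^{-1/2}√(x/π) + O(m⁻¹)` uniformly for `x ∈ [a,b]`, the expectation
being written as a sum against the product of Poisson probability weights. -/
theorem poisson_min_mean_expansion (a b : ℝ) (ha : 0 < a) (hab : a ≤ b) :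
    ∃ C : ℝ, ∃ M : ℕ, ∀ m : ℕ, M ≤ m → ∀ x ∈ Set.Icc a b,
      |(∑' p : ℕ × ℕ, (min p.1 p.2 : ℝ)
            * (Real.exp (-((m : ℝ) * x)) * ((m : ℝ) * x) ^ p.1 / Nat.factorial p.1)
            * (Real.exp (-((m : ℝ) * x)) * ((m : ℝ) * x) ^ p.2 / Nat.factorial p.2))
          / (m : ℝ)
        - x + (m : ℝ) ^ (-(1:ℝ)/2) * Real.sqrt (x / Real.pi)|
      ≤ C * ((m : ℝ))⁻¹ :=
  poisson_min_mean_expansion_general a b ha
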